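/- Let k ≥ 3 and G = C(3k+1; {1,2,4}) with vertices v_1,…,v_{3k+1}. The set X = {v_1, v_3} ∪ ⋃_{t=2}^{k} {v_{3t−1}, v_{3t}} is a vertex cut with |X| = 2k and c(G−X) = k−1; hence τ(G) ≤ 2k/(k−1). -/

import Mathlib

/-!
Read each vertex through its representative in `0, …, 3k`. Then `X` consists of `1`, the nonzero
multiples of `3` and the numbers `≡ 2 (mod 3)` other than `2`, so its complement is
`{0, 2} ∪ {3t + 1 | 1 ≤ t ≤ k - 1}`. Two vertices `≡ 1 (mod 3)` differ by a multiple of `3` of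
absolute value at most `3k - 6`, which is never `±1, ±2, ±4` modulo `3k + 1`, and the neighbours
of `0` and `2` outside `X` are `0, 2, 4`. Hence `G - X` has the components `{0, 2, 4}` and the
`k - 2` singletons `{3t + 1}`, `2 ≤ t ≤ k - 1`, and `X` witnesses `τ(G) ≤ 2k / (k - 1)`.
-/

open SimpleGraph

def circGraph (n : ℕ) (s : Set (ZMod n)) : SimpleGraph (ZMod n) where
  Adj i j := i ≠ j ∧ (i - j ∈ s ∨ j - i ∈ s)
  symm := ⟨fun i j h => ⟨h.1.symm, h.2.symm⟩⟩
  loopless := ⟨fun i h => h.1 rfl⟩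

/-- Number of connected components of `G - S`. -/
noncomputable def numComp {V : Type*} (G : SimpleGraph V) (S : Set V) : ℕ :=
  Nat.card ((G.induce Sᶜ).ConnectedComponent)

/-- `S` is a vertex cut: removing `S` leaves a disconnected graph. -/
def IsVertexCut {V : Type*} (G : SimpleGraph V) (S : Set V) : Prop :=
  1 < numComp G S

/-- Toughness: minimum of |S| / c(G - S) over vertex cuts `S`. -/
noncomputable def toughness {V : Type*} (G : SimpleGraph V) : ℝ :=
  sInf {x : ℝ | ∃ S : Set V, IsVertexCut G S ∧ x = (S.ncard : ℝ) / (numComp G S : ℝ)}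

def MinimallyTough {V : Type*} (G : SimpleGraph V) (t : ℝ) : Prop :=
  toughness G = t ∧ ∀ e ∈ G.edgeSet, toughness (G.deleteEdges {e}) < t

theorem SimpleGraph.natCard_connectedComponent_eq_of_surjective {V β : Type*}
    {G : SimpleGraph V} (f : V → β) (hadj : ∀ ⦃v w⦄, G.Adj v w → f v = f w)
    (hreach : ∀ ⦃v w⦄, f v = f w → G.Reachable v w) (hf : Function.Surjective f) :
    Nat.card G.ConnectedComponent = Nat.card β := by
  have hwalk : ∀ {v w} (p : G.Walk v w), f v = f w := by
    intro v w p
    induction p with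
    | nil => rfl
    | cons h _ ih => exact (hadj h).trans ih
  refine Nat.card_eq_of_bijective (ConnectedComponent.lift f fun _ _ p _ => hwalk p) ⟨?_, ?_⟩
  · rintro ⟨v⟩ ⟨w⟩ h
    exact ConnectedComponent.sound (hreach h)
  · intro b
    obtain ⟨v, rfl⟩ := hf b
    exact ⟨G.connectedComponentMk v, rfl⟩

theorem toughness_le_of_isVertexCut {V : Type*} {G : SimpleGraph V} {S : Set V}
    (hS : IsVertexCut G S) : toughness G ≤ S.ncard / numComp G S :=
  csInf_le ⟨0, by rintro x ⟨T, -, rfl⟩; positivity⟩ ⟨S, hS, rfl⟩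

theorem ZMod.sub_eq_natCast_iff {n : ℕ} [NeZero n] {a b : ZMod n} {d : ℕ} (hd : d < n) :
    a - b = d ↔ a.val = b.val + d ∨ a.val + n = b.val + d := by
  rw [sub_eq_iff_eq_add', ← (ZMod.val_injective n).eq_iff, ZMod.val_add, ZMod.val_cast_of_lt hd]
  have := a.val_lt; have := b.val_lt
  rcases lt_or_ge (b.val + d) n with h | h
  · rw [Nat.mod_eq_of_lt h]; omega
  · rw [Nat.mod_eq_sub_mod h, Nat.mod_eq_of_lt (by omega)]; omega

theorem circGraph_one_two_four_adj_iff {n : ℕ} [NeZero n] (hn : 4 < n) {a b : ZMod n} :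
    (circGraph n {1, 2, 4}).Adj a b ↔ ∃ d, (d = 1 ∨ d = 2 ∨ d = 4) ∧
      (a.val = b.val + d ∨ a.val + n = b.val + d ∨ b.val = a.val + d ∨ b.val + n = a.val + d) := by
  have hd_lt : ∀ d : ℕ, d = 1 ∨ d = 2 ∨ d = 4 → d < n := by omega
  have hsub : ∀ x y : ZMod n, x - y ∈ ({1, 2, 4} : Set (ZMod n)) ↔
      ∃ d, (d = 1 ∨ d = 2 ∨ d = 4) ∧ (x.val = y.val + d ∨ x.val + n = y.val + d) := by
    intro x y
    rw [show ({1, 2, 4} : Set (ZMod n)) = Nat.cast '' {1, 2, 4} by simp [Set.image_insert_eq]]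
    refine exists_congr fun d => and_congr_right fun hd124 => ?_
    rw [eq_comm, ZMod.sub_eq_natCast_iff (hd_lt d hd124)]
  have := a.val_lt; have := b.val_lt
  simp only [circGraph, hsub, ← ZMod.val_injective n |>.ne_iff]
  constructor
  · rintro ⟨-, ⟨d, hd, h⟩ | ⟨d, hd, h⟩⟩ <;> exact ⟨d, hd, by omega⟩
  · rintro ⟨d, hd124, h⟩
    have := hd_lt d hd124
    refine ⟨by omega, ?_⟩
    rcases h with h | h | h | h
    exacts [Or.inl ⟨d, hd124, Or.inl h⟩, Or.inl ⟨d, hd124, Or.inr h⟩,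
      Or.inr ⟨d, hd124, Or.inl h⟩, Or.inr ⟨d, hd124, Or.inr h⟩]

def cutSet (k : ℕ) : Set (ZMod (3*k+1)) :=
  {v | v = ((1 : ℕ) : ZMod (3*k+1)) ∨ v = ((3 : ℕ) : ZMod (3*k+1)) ∨
    ∃ t : ℕ, 2 ≤ t ∧ t ≤ k ∧
      (v = ((3*t-1 : ℕ) : ZMod (3*k+1)) ∨ v = ((3*t : ℕ) : ZMod (3*k+1)))}

abbrev IsCutIndex (m : ℕ) : Prop := m = 1 ∨ (m % 3 = 0 ∧ m ≠ 0) ∨ (m % 3 = 2 ∧ m ≠ 2)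

theorem count_isCutIndex (k : ℕ) : Nat.count IsCutIndex (3 * k + 1) = 2 * k := by
  induction k with
  | zero => simp [Nat.count_succ]
  | succ k ih =>
    rw [show 3 * (k + 1) + 1 = 3 * k + 1 + 3 by ring, Nat.count_add, ih]
    simp only [Nat.count_succ, Nat.count_zero]
    split_ifs <;> omega

section
variable {k : ℕ}

theorem mem_cutSet_iff (hk : 1 ≤ k) {v : ZMod (3*k+1)} : v ∈ cutSet k ↔ IsCutIndex v.val := by
  constructor
  · rintro (rfl | rfl | ⟨t, ht2, htk, rfl | rfl⟩) <;> rw [ZMod.val_cast_of_lt (by omega)] <;> omega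
  · intro h
    have hv : v = (v.val : ZMod (3*k+1)) := (ZMod.natCast_zmod_val v).symm
    have := v.val_lt
    rw [hv]
    rcases h with h1 | ⟨h0, hne⟩ | ⟨h2, hne⟩
    · exact Or.inl (congrArg _ h1)
    · rcases eq_or_ne v.val 3 with h3 | h3
      · exact Or.inr (Or.inl (congrArg _ h3))
      · exact Or.inr (Or.inr ⟨v.val / 3, by omega, by omega, Or.inr (congrArg _ (by omega))⟩)
    · exact Or.inr (Or.inr ⟨(v.val + 1) / 3, by omega, by omega, Or.inl (congrArg _ (by omega))⟩)

theorem ncard_cutSet (hk : 1 ≤ k) : (cutSet k).ncard = 2 * k := by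
  rw [← Set.ncard_image_of_injective _ (ZMod.val_injective _), ← count_isCutIndex,
    Nat.count_eq_card_filter_range, ← Set.ncard_coe_finset]
  congr 1
  ext m
  simp only [Set.mem_image, Finset.coe_filter, Finset.mem_range, Set.mem_ofPred_eq]
  constructor
  · rintro ⟨v, hv, rfl⟩
    exact ⟨v.val_lt, (mem_cutSet_iff hk).1 hv⟩
  · rintro ⟨hm, h⟩
    refine ⟨m, ?_, ZMod.val_cast_of_lt hm⟩
    rwa [mem_cutSet_iff hk, ZMod.val_cast_of_lt hm]

theorem val_of_notMem_cutSet (hk : 1 ≤ k) {v : ZMod (3*k+1)} (hv : v ∉ cutSet k) :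
    v.val = 0 ∨ v.val = 2 ∨ (v.val % 3 = 1 ∧ v.val ≠ 1) := by
  rw [mem_cutSet_iff hk] at hv
  omega

theorem val_le_four_of_adj (hk : 2 ≤ k) {a b : ZMod (3*k+1)} (ha : a ∉ cutSet k)
    (hb : b ∉ cutSet k) (hab : (circGraph (3*k+1) {1, 2, 4}).Adj a b) : a.val ≤ 4 := by
  obtain ⟨d, hd, h⟩ := (circGraph_one_two_four_adj_iff (by omega)).1 hab
  have := val_of_notMem_cutSet (by omega) ha
  have := val_of_notMem_cutSet (by omega) hb
  have := a.val_lt; have := b.val_lt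
  omega

theorem reachable_of_val_le_four (hk : 2 ≤ k) {v w : ((cutSet k)ᶜ : Set (ZMod (3*k+1)))}
    (hv : v.1.val ≤ 4) (hw : w.1.val ≤ 4) :
    ((circGraph (3*k+1) {1, 2, 4}).induce (cutSet k)ᶜ).Reachable v w := by
  have h0 : (0 : ZMod (3*k+1)) ∉ cutSet k := by
    rw [mem_cutSet_iff (by omega), ZMod.val_zero]
    omega
  suffices h : ∀ u : ((cutSet k)ᶜ : Set (ZMod (3*k+1))), u.1.val ≤ 4 →
      ((circGraph (3*k+1) {1, 2, 4}).induce (cutSet k)ᶜ).Reachable ⟨0, h0⟩ u from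
    (h v hv).symm.trans (h w hw)
  intro u hu
  have := val_of_notMem_cutSet (by omega) u.2
  rcases eq_or_ne u.1.val 0 with hu0 | hu0
  · have : u = ⟨0, h0⟩ := Subtype.ext (ZMod.val_injective _ (by rw [hu0, ZMod.val_zero]))
    exact this ▸ Reachable.refl _
  · refine Adj.reachable (induce_adj.2 ((circGraph_one_two_four_adj_iff (by omega)).2 ?_))
    exact ⟨u.1.val, by omega, by rw [ZMod.val_zero]; omega⟩

theorem numComp_cutSet (hk : 2 ≤ k) :
    numComp (circGraph (3*k+1) {1, 2, 4}) (cutSet k) = k - 1 := by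
  have hlt : ∀ v : ((cutSet k)ᶜ : Set (ZMod (3*k+1))), v.1.val / 3 - 1 < k - 1 := fun v => by
    have := val_of_notMem_cutSet (by omega) v.2
    have := v.1.val_lt
    omega
  -- `v.val / 3 - 1` indexes the component of `v`: truncated subtraction sends `0`, `2` and `4`
  -- alike to `0`.
  refine (natCard_connectedComponent_eq_of_surjective
    (fun v => (⟨v.1.val / 3 - 1, hlt v⟩ : Fin (k - 1))) ?_ ?_ ?_).trans (Nat.card_fin _)
  · intro v w hvw
    have := val_le_four_of_adj hk v.2 w.2 hvw
    have := val_le_four_of_adj hk w.2 v.2 hvw.symm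
    exact Fin.ext (by dsimp only; omega)
  · intro v w hvw
    have hvw : v.1.val / 3 - 1 = w.1.val / 3 - 1 := Fin.val_eq_of_eq hvw
    have := val_of_notMem_cutSet (by omega) v.2
    have := val_of_notMem_cutSet (by omega) w.2
    by_cases hv : v.1.val ≤ 4
    · exact reachable_of_val_le_four hk hv (by omega)
    · have : v = w := Subtype.ext (ZMod.val_injective _ (by omega))
      exact this ▸ Reachable.refl _
  · intro i
    have hi : 3 * i.val + 4 < 3 * k + 1 := by have := i.isLt; omega
    refine ⟨⟨(3 * i.val + 4 : ℕ), ?_⟩, Fin.ext ?_⟩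
    · rw [Set.mem_compl_iff, mem_cutSet_iff (by omega), ZMod.val_cast_of_lt hi]
      omega
    · dsimp only
      rw [ZMod.val_cast_of_lt hi]
      omega

end

theorem stmt12 (k : ℕ) (hk : 3 ≤ k) :
    let G := circGraph (3*k+1) {1, 2, 4}
    let X : Set (ZMod (3*k+1)) :=
      {v | v = ((1 : ℕ) : ZMod (3*k+1)) ∨ v = ((3 : ℕ) : ZMod (3*k+1)) ∨
        ∃ t : ℕ, 2 ≤ t ∧ t ≤ k ∧
          (v = ((3*t-1 : ℕ) : ZMod (3*k+1)) ∨ v = ((3*t : ℕ) : ZMod (3*k+1)))}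
    IsVertexCut G X ∧ X.ncard = 2*k ∧ numComp G X = k - 1 ∧
      toughness G ≤ (2 * (k : ℝ)) / ((k : ℝ) - 1) := by
  intro G X
  have hcomp : numComp G X = k - 1 := numComp_cutSet (by omega)
  have hcard : X.ncard = 2 * k := ncard_cutSet (by omega)
  have hcut : IsVertexCut G X := by
    unfold IsVertexCut
    omega
  refine ⟨hcut, hcard, hcomp, ?_⟩
  calc toughness G ≤ X.ncard / numComp G X := toughness_le_of_isVertexCut hcut
    _ = 2 * k / (k - 1) := by
      rw [hcard, hcomp, Nat.cast_sub (by omega)]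
      push_cast
      rfl
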